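/- arXiv:2012.06247 — 3 statements merged into one kernel-verified Lean document; each statement's English description precedes it below -/
import Mathlib

section
/- Let d ≥ 1 and let γ(n) = (P_1(n),…,P_d(n)) be a polynomial curve in ℤ^d with separated degrees, and assume γ is not a single linear polynomial (i.e., it is not the case that d = 1 and deg P_1 = 1). Then for every ε > 0 there exists a constant C = C(γ, ε) > 0 such that for every integer N ≥ 1 and all finite sets E, F ⊆ ℤ^d, #{(x,n) ∈ F × {1,…,N} : x − γ(n) ∈ E} ≤ C · N^{1/3+ε} · |E|^{2/3} · |F|^{2/3} (equivalently, ⟨𝒜_N 1_E, 1_F⟩ ≤ C N^{−2/3+ε} |E|^{2/3} |F|^{2/3}). -/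
/-!
Write `s` for the number of incidences `(x, n) ∈ F × [1, N]` with `x - γ n ∈ E`. Cauchy–Schwarz
in `x` bounds `s²` by `|F|` times the number of quadruples with `e + γ n = e' + γ n'`,
`e, e' ∈ E`. The diagonal `e = e'` contributes `O(N |E|)`. Off the diagonal, a solution of
`γ n - γ n' = v ≠ 0` has `n - n'` dividing a nonzero coordinate of `v`, which is polynomially large
in `N`, so the divisor bound leaves `O(N^ε)` differences; for each of them the coordinate of degree
`≥ 2` fixes `n` up to boundedly many choices. Hence `s² ≲ |F| (N |E| + N^ε |E|²)`. Multiplying the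
two terms by `s ≲ |E| |F|` and `s ≤ N |F|` respectively gives `s³ ≲ N^(1+ε) |E|² |F|²`.
-/

open Finset Polynomial

section Incidences

variable {G α : Type*} [AddCommGroup G] [DecidableEq G] (γ : α → G) (I : Finset α)

def curveIncidences (E F : Finset G) : ℕ := #{z ∈ F ×ˢ I | z.1 - γ z.2 ∈ E}

def curveEnergy (A : Finset G) : ℕ :=
  #{z ∈ (A ×ˢ A) ×ˢ (I ×ˢ I) | z.1.1 + γ z.2.1 = z.1.2 + γ z.2.2}

def curveDiffCount (v : G) : ℕ := #{p ∈ I ×ˢ I | γ p.1 - γ p.2 = v}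

variable {γ I}

theorem curveIncidences_le_card_mul_card (E F : Finset G) :
    curveIncidences γ I E F ≤ #F * #I :=
  (card_filter_le _ _).trans (card_product F I).le

theorem curveIncidences_le_mul_card_mul_card {K : ℕ} (hfib : ∀ g, #{n ∈ I | γ n = g} ≤ K)
    (E F : Finset G) : curveIncidences γ I E F ≤ K * (#E * #F) := by
  rw [← card_product]
  refine card_le_mul_card_image_of_maps_to (f := fun z => (z.1 - γ z.2, z.1)) ?_ K ?_
  · intro z hz
    simp only [mem_filter, mem_product] at hz ⊢
    exact ⟨hz.2, hz.1.1⟩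
  · rintro ⟨e, x⟩ -
    calc #{z ∈ {z ∈ F ×ˢ I | z.1 - γ z.2 ∈ E} | (z.1 - γ z.2, z.1) = (e, x)}
        ≤ #{n ∈ I | γ n = x - e} := by
          refine card_le_card_of_injOn Prod.snd (fun z hz => ?_) fun z hz z' hz' h => ?_
          · simp only [mem_coe, mem_filter, mem_product, Prod.mk.injEq] at hz ⊢
            obtain ⟨⟨⟨-, hn⟩, -⟩, rfl, rfl⟩ := hz
            exact ⟨hn, by abel⟩
          · simp only [mem_coe, mem_filter, Prod.mk.injEq] at hz hz'
            exact Prod.ext (hz.2.2.trans hz'.2.2.symm) h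
      _ ≤ K := hfib _

theorem sq_curveIncidences_le (E F : Finset G) :
    curveIncidences γ I E F ^ 2 ≤ #F * curveEnergy γ I E := by
  set r : G → ℕ := fun x => #{n ∈ I | x - γ n ∈ E}
  have hsum : curveIncidences γ I E F = ∑ x ∈ F, r x := by
    rw [curveIncidences, card_filter, sum_product]
    exact sum_congr rfl fun x _ => (card_filter _ _).symm
  have hsq : ∑ x ∈ F, r x ^ 2 ≤ curveEnergy γ I E := by
    calc ∑ x ∈ F, r x ^ 2
        = #{z ∈ F ×ˢ (I ×ˢ I) | z.1 - γ z.2.1 ∈ E ∧ z.1 - γ z.2.2 ∈ E} := by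
          rw [card_filter, sum_product]
          refine sum_congr rfl fun x _ => ?_
          rw [← card_filter, filter_product (fun n => x - γ n ∈ E) (fun n => x - γ n ∈ E),
            card_product, sq]
      _ ≤ curveEnergy γ I E := by
          refine card_le_card_of_injOn (fun z => ((z.1 - γ z.2.1, z.1 - γ z.2.2), z.2)) ?_ ?_
          · intro z hz
            simp only [coe_filter, mem_product, Set.mem_ofPred_eq] at hz ⊢
            exact ⟨⟨⟨hz.2.1, hz.2.2⟩, hz.1.2⟩, by abel⟩
          · intro z _ z' _ h
            simp only [Prod.mk.injEq] at h
            obtain ⟨⟨h1, -⟩, h2⟩ := h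
            rw [h2] at h1
            exact Prod.ext (sub_left_injective h1) h2
  calc curveIncidences γ I E F ^ 2 = (∑ x ∈ F, r x) ^ 2 := by rw [hsum]
    _ ≤ #F * ∑ x ∈ F, r x ^ 2 := sq_sum_le_card_mul_sum_sq
    _ ≤ #F * curveEnergy γ I E := Nat.mul_le_mul_left _ hsq

theorem curveEnergy_eq_sum (A : Finset G) :
    curveEnergy γ I A = ∑ e ∈ A ×ˢ A, curveDiffCount γ I (e.2 - e.1) := by
  have key : ∀ (e : G × G) (p : α × α),
      e.1 + γ p.1 = e.2 + γ p.2 ↔ γ p.1 - γ p.2 = e.2 - e.1 := fun e p => by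
    rw [sub_eq_sub_iff_add_eq_add, add_comm (γ p.1)]
  rw [curveEnergy, card_filter, sum_product]
  refine sum_congr rfl fun e _ => ?_
  rw [curveDiffCount, card_filter]
  simp only [key]

theorem curveDiffCount_zero_le {K : ℕ} (hfib : ∀ g, #{n ∈ I | γ n = g} ≤ K) :
    curveDiffCount γ I 0 ≤ K * #I := by
  classical
  rw [curveDiffCount]
  refine card_le_mul_card_image_of_maps_to (f := Prod.snd) (t := I) (fun p hp => ?_) K
    fun n' _ => ?_
  · exact (mem_product.mp (filter_subset _ _ hp)).2
  calc #{p ∈ {p ∈ I ×ˢ I | γ p.1 - γ p.2 = 0} | p.2 = n'} ≤ #{n ∈ I | γ n = γ n'} := by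
        refine card_le_card_of_injOn Prod.fst (fun p hp => ?_) fun p hp p' hp' h => ?_
        · simp only [mem_coe, mem_filter, mem_product, sub_eq_zero] at hp ⊢
          obtain ⟨⟨⟨hn, -⟩, hγ⟩, rfl⟩ := hp
          exact ⟨hn, hγ⟩
        · simp only [mem_coe, mem_filter] at hp hp'
          exact Prod.ext h (hp.2.trans hp'.2.symm)
    _ ≤ K := hfib _

theorem curveEnergy_le {K : ℕ} (hfib : ∀ g, #{n ∈ I | γ n = g} ≤ K) {M : ℝ}
    (hM0 : 0 ≤ M) (hM : ∀ v ≠ 0, (curveDiffCount γ I v : ℝ) ≤ M) (A : Finset G) :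
    (curveEnergy γ I A : ℝ) ≤ K * #I * #A + M * #A ^ 2 := by
  rw [curveEnergy_eq_sum, ← diag_union_offDiag, sum_union (disjoint_diag_offDiag A)]
  push_cast
  gcongr
  · calc ∑ e ∈ A.diag, (curveDiffCount γ I (e.2 - e.1) : ℝ)
        ≤ ∑ _e ∈ A.diag, (K * #I : ℝ) := sum_le_sum fun e he => by
          rw [(mem_diag.mp he).2, sub_self]; exact_mod_cast curveDiffCount_zero_le hfib
      _ = K * #I * #A := by rw [sum_const, nsmul_eq_mul, diag_card]; ring
  · calc ∑ e ∈ A.offDiag, (curveDiffCount γ I (e.2 - e.1) : ℝ)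
        ≤ ∑ _e ∈ A.offDiag, M := sum_le_sum fun e he =>
          hM _ (sub_ne_zero.mpr (mem_offDiag.mp he).2.2.symm)
      _ ≤ M * #A ^ 2 := by
          rw [sum_const, nsmul_eq_mul, mul_comm, sq]
          gcongr
          exact_mod_cast (offDiag_card A).trans_le (Nat.sub_le _ _)

theorem curveIncidences_pow_three_le {K : ℕ} (hfib : ∀ g, #{n ∈ I | γ n = g} ≤ K) {M : ℝ}
    (hM0 : 0 ≤ M) (hM : ∀ v ≠ 0, (curveDiffCount γ I v : ℝ) ≤ M) (E F : Finset G) :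
    (curveIncidences γ I E F : ℝ) ^ 3 ≤ (K ^ 2 + M) * #I * #E ^ 2 * #F ^ 2 := by
  have hKEF : (curveIncidences γ I E F : ℝ) ≤ K * (#E * #F) := by
    exact_mod_cast curveIncidences_le_mul_card_mul_card hfib E F
  have hFI : (curveIncidences γ I E F : ℝ) ≤ #F * #I := by
    exact_mod_cast curveIncidences_le_card_mul_card E F
  have hsq : (curveIncidences γ I E F : ℝ) ^ 2 ≤ #F * (K * #I * #E + M * #E ^ 2) := by
    calc (curveIncidences γ I E F : ℝ) ^ 2 ≤ #F * curveEnergy γ I E := by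
          exact_mod_cast sq_curveIncidences_le (γ := γ) (I := I) E F
      _ ≤ #F * (K * #I * #E + M * #E ^ 2) := by gcongr; exact curveEnergy_le hfib hM0 hM E
  set s : ℝ := (curveIncidences γ I E F : ℝ)
  have hs : 0 ≤ s := Nat.cast_nonneg _
  calc s ^ 3 = s * s ^ 2 := by ring
    _ ≤ s * (#F * (K * #I * #E + M * #E ^ 2)) := by gcongr
    _ = s * (K * #I * #E * #F) + s * (M * #E ^ 2 * #F) := by ring
    _ ≤ K * (#E * #F) * (K * #I * #E * #F) + #F * #I * (M * #E ^ 2 * #F) := by gcongr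
    _ = (K ^ 2 + M) * #I * #E ^ 2 * #F ^ 2 := by ring

end Incidences

theorem Int.card_divisors (z : ℤ) : #z.divisors = 2 * #z.natAbs.divisors := by
  rw [Int.divisors, card_disjUnion, card_map, card_map, two_mul]

section RootCounting

variable {R : Type*} [CommRing R] [IsDomain R] [DecidableEq R]

theorem Polynomial.card_filter_eval_eq_zero_le {p : R[X]} (hp : p ≠ 0) (s : Finset R) :
    #{x ∈ s | p.eval x = 0} ≤ p.natDegree :=
  card_le_degree_of_subset_roots fun _ hx => (mem_roots hp).mpr (mem_filter.mp hx).2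

theorem Polynomial.card_filter_eval_eq_le {p : R[X]} (hp : 0 < p.natDegree) (s : Finset R)
    (c : R) : #{x ∈ s | p.eval x = c} ≤ p.natDegree := by
  have hpc : (p - C c).natDegree = p.natDegree := natDegree_sub_C
  calc #{x ∈ s | p.eval x = c} = #{x ∈ s | (p - C c).eval x = 0} := by
        simp only [eval_sub, eval_C, sub_eq_zero]
    _ ≤ p.natDegree := hpc ▸ card_filter_eval_eq_zero_le (ne_zero_of_natDegree_gt (hpc ▸ hp)) s

end RootCounting

theorem Polynomial.sub_comp_X_sub_C_sub_C_ne_zero {R : Type*} [CommRing R] [IsDomain R]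
    [CharZero R] {Q : R[X]} (hQ : 2 ≤ Q.natDegree) {m : R} (hm : m ≠ 0) (w : R) :
    Q - Q.comp (X - C m) - C w ≠ 0 := by
  intro h
  have hstep : ∀ x, Q.eval x = Q.eval (x - m) + w := fun x => by
    have := congrArg (eval x) h
    simp only [eval_sub, eval_comp, eval_X, eval_C, eval_zero] at this
    linear_combination this
  have hlin : ∀ k : ℕ, Q.eval (k * m) = Q.eval 0 + k * w := by
    intro k
    induction k with
    | zero => simp
    | succ k ih => rw [hstep, Nat.cast_succ, add_one_mul, add_sub_cancel_right, ih]; ring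
  have hcomp : Q.comp (C m * X) = C (Q.eval 0) + C w * X := by
    refine eq_of_infinite_eval_eq _ _ (Set.infinite_of_injective_forall_mem Nat.cast_injective
      fun k : ℕ => ?_)
    simp only [Set.mem_ofPred_eq, eval_comp, eval_mul, eval_C, eval_X, eval_add]
    rw [mul_comm, hlin]; ring
  have hdeg := congrArg natDegree hcomp
  rw [natDegree_comp, natDegree_C_mul_X m hm, mul_one] at hdeg
  have : (C (Q.eval 0) + C w * X).natDegree ≤ 1 := by compute_degree
  omega

theorem exists_add_one_le_mul_pow {r : ℝ} (hr : 1 < r) :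
    ∃ C, 1 ≤ C ∧ ∀ a : ℕ, (a + 1 : ℝ) ≤ C * r ^ a := by
  refine ⟨r / (r - 1), (one_le_div (by linarith)).mpr (by linarith), fun a => ?_⟩
  have hbern : 1 + a * (r - 1) ≤ r ^ a := by
    simpa using one_add_mul_le_pow (a := r - 1) (by linarith) a
  have hra : 1 ≤ r ^ a := one_le_pow₀ hr.le
  rw [div_mul_eq_mul_div, le_div_iff₀ (by linarith)]
  nlinarith

/-- Each prime power `p ^ a` contributes a factor `a + 1` to the divisor count; it is at most
`(p ^ a) ^ δ` once `p ^ δ ≥ 2`, and at most a constant multiple of it for the finitely many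
smaller primes. -/
theorem exists_add_one_le_rpow_pow {δ : ℝ} (hδ : 0 < δ) :
    ∃ C, 1 ≤ C ∧ ∃ B : ℕ, ∀ p : ℕ, 2 ≤ p → ∀ a : ℕ,
      (a + 1 : ℝ) ≤ (if p ≤ B then C else 1) * ((p : ℝ) ^ a) ^ δ := by
  obtain ⟨C, hC1, hC⟩ := exists_add_one_le_mul_pow (Real.one_lt_rpow one_lt_two hδ)
  refine ⟨C, hC1, ⌈(2 : ℝ) ^ δ⁻¹⌉₊, fun p hp a => ?_⟩
  have hp0 : (0 : ℝ) ≤ p := Nat.cast_nonneg p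
  rw [← Real.rpow_pow_comm hp0]
  split_ifs with hpB
  · calc (a + 1 : ℝ) ≤ C * ((2 : ℝ) ^ δ) ^ a := hC a
      _ ≤ C * ((p : ℝ) ^ δ) ^ a := by gcongr; exact_mod_cast hp
  · have h2p : (2 : ℝ) ≤ (p : ℝ) ^ δ := by
      calc (2 : ℝ) = ((2 : ℝ) ^ δ⁻¹) ^ δ := by rw [← Real.rpow_mul zero_le_two,
            inv_mul_cancel₀ hδ.ne', Real.rpow_one]
        _ ≤ (p : ℝ) ^ δ := by
            gcongr
            exact (Nat.le_ceil _).trans (by exact_mod_cast (not_le.mp hpB).le)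
    calc (a + 1 : ℝ) ≤ 2 ^ a := by exact_mod_cast Nat.lt_two_pow_self
      _ ≤ ((p : ℝ) ^ δ) ^ a := by gcongr
      _ = 1 * ((p : ℝ) ^ δ) ^ a := (one_mul _).symm

theorem Nat.exists_card_divisors_le_mul_rpow {δ : ℝ} (hδ : 0 < δ) :
    ∃ C, 0 ≤ C ∧ ∀ n : ℕ, n ≠ 0 → (#n.divisors : ℝ) ≤ C * (n : ℝ) ^ δ := by
  obtain ⟨C, hC1, B, hCB⟩ := exists_add_one_le_rpow_pow hδ
  refine ⟨C ^ (B + 1), by positivity, fun n hn => ?_⟩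
  have hprod : (n : ℝ) ^ δ = ∏ p ∈ n.primeFactors, ((p : ℝ) ^ n.factorization p) ^ δ := by
    rw [Real.finsetProd_rpow _ _ fun _ _ => by positivity]
    exact_mod_cast congrArg (fun m : ℕ => (m : ℝ) ^ δ) (Nat.prod_factorization_pow_eq_self hn).symm
  have hsmall : ∏ p ∈ n.primeFactors, (if p ≤ B then C else 1) ≤ C ^ (B + 1) := by
    rw [prod_ite, prod_const, prod_const_one, mul_one]
    refine pow_le_pow_right₀ hC1 ((card_le_card fun p hp => ?_).trans (card_range _).le)
    exact mem_range.mpr (Nat.lt_succ_of_le (mem_filter.mp hp).2)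
  calc (#n.divisors : ℝ) = ∏ p ∈ n.primeFactors, ((n.factorization p : ℝ) + 1) := by
        rw [Nat.card_divisors hn]; push_cast; rfl
    _ ≤ ∏ p ∈ n.primeFactors, ((if p ≤ B then C else 1) * ((p : ℝ) ^ n.factorization p) ^ δ) :=
        prod_le_prod (fun _ _ => by positivity)
          fun p hp => hCB p (Nat.prime_of_mem_primeFactors hp).two_le _
    _ ≤ C ^ (B + 1) * (n : ℝ) ^ δ := by
        rw [prod_mul_distrib, hprod]
        gcongr

theorem Polynomial.abs_eval_le_mul_pow {R : Type*} [CommRing R] [LinearOrder R]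
    [IsStrictOrderedRing R] (Q : R[X]) {x N : R} (hN : 1 ≤ N) (hx : |x| ≤ N) {D : ℕ}
    (hD : Q.natDegree ≤ D) :
    |Q.eval x| ≤ (∑ i ∈ range (Q.natDegree + 1), |Q.coeff i|) * N ^ D := by
  rw [eval_eq_sum_range, sum_mul]
  refine (abs_sum_le_sum_abs _ _).trans (sum_le_sum fun i hi => ?_)
  rw [abs_mul, abs_pow]
  gcongr
  calc |x| ^ i ≤ N ^ i := by gcongr
    _ ≤ N ^ D := pow_le_pow_right₀ hN ((Nat.lt_succ_iff.mp (mem_range.mp hi)).trans hD)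

section PolynomialCurve

variable {ι : Type*} [Fintype ι]

def polyCurve (P : ι → ℤ[X]) (n : ℤ) : ι → ℤ := fun j => (P j).eval n

theorem card_filter_polyCurve_eq_le (P : ι → ℤ[X]) {k : ι} (hk : 0 < (P k).natDegree)
    (I : Finset ℤ) (g : ι → ℤ) : #{n ∈ I | polyCurve P n = g} ≤ (P k).natDegree := by
  refine (card_le_card fun n hn => ?_).trans (card_filter_eval_eq_le hk I (g k))
  simp only [mem_filter] at hn ⊢
  exact ⟨hn.1, congrFun hn.2 k⟩

/-- A solution `(n, n')` of `γ n - γ n' = v` has `n - n'` dividing `v j`, and for each such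
difference `m` the top-degree coordinate leaves at most `deg P k` choices of `n`. -/
theorem curveDiffCount_polyCurve_le (P : ι → ℤ[X]) {k : ι} (hk : 2 ≤ (P k).natDegree)
    (I : Finset ℤ) {v : ι → ℤ} {j : ι} (hv : v j ≠ 0) :
    curveDiffCount (polyCurve P) I v ≤ 2 * (P k).natDegree * #(v j).natAbs.divisors := by
  rw [mul_comm 2, mul_assoc, ← Int.card_divisors, curveDiffCount]
  refine card_le_mul_card_image_of_maps_to (f := fun p : ℤ × ℤ => p.1 - p.2) (fun p hp => ?_)
    _ fun m hm => ?_
  · simp only [mem_filter] at hp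
    rw [Int.mem_divisors, ← congrFun hp.2 j]
    exact ⟨sub_dvd_eval_sub _ _ _, congrFun hp.2 j ▸ hv⟩
  have hm0 : m ≠ 0 := by
    rintro rfl
    exact hv (zero_dvd_iff.mp (Int.mem_divisors.mp hm).1)
  set Q := P k
  calc #{p ∈ {p ∈ I ×ˢ I | polyCurve P p.1 - polyCurve P p.2 = v} | p.1 - p.2 = m}
      ≤ #{n ∈ I | (Q - Q.comp (X - C m) - C (v k)).eval n = 0} := by
        refine card_le_card_of_injOn Prod.fst (fun p hp => ?_) fun p hp p' hp' h => ?_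
        · simp only [mem_coe, mem_filter, mem_product] at hp ⊢
          obtain ⟨⟨⟨hn, -⟩, hγ⟩, rfl⟩ := hp
          refine ⟨hn, ?_⟩
          simp only [eval_sub, eval_comp, eval_X, eval_C, sub_sub_cancel, ← congrFun hγ k,
            polyCurve, Pi.sub_apply, sub_self, Q]
        · simp only [mem_coe, mem_filter] at hp hp'
          exact Prod.ext h (by linarith [hp.2, hp'.2])
    _ ≤ (Q - Q.comp (X - C m) - C (v k)).natDegree :=
        card_filter_eval_eq_zero_le (sub_comp_X_sub_C_sub_C_ne_zero hk hm0 _) I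
    _ ≤ Q.natDegree := by
        refine (natDegree_sub_le _ _).trans (max_le ((natDegree_sub_le _ _).trans
          (max_le le_rfl ?_)) ((natDegree_C _).trans_le (Nat.zero_le _)))
        rw [natDegree_comp, natDegree_X_sub_C, mul_one]

theorem abs_eval_sub_eval_le (Q : ℤ[X]) {N : ℕ} {n n' : ℤ} (hn : n ∈ Icc 1 (N : ℤ))
    (hn' : n' ∈ Icc 1 (N : ℤ)) {D : ℕ} (hD : Q.natDegree ≤ D) :
    |Q.eval n - Q.eval n'| ≤ 2 * (∑ i ∈ range (Q.natDegree + 1), |Q.coeff i|) * N ^ D := by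
  rw [mem_Icc] at hn hn'
  have hN : (1 : ℤ) ≤ N := hn.1.trans hn.2
  have bound := fun x (hx : 1 ≤ x ∧ x ≤ (N : ℤ)) =>
    Q.abs_eval_le_mul_pow hN (abs_le.mpr ⟨by linarith, hx.2⟩) hD
  linarith [abs_sub (Q.eval n) (Q.eval n'), bound n hn, bound n' hn']

theorem exists_curveDiffCount_polyCurve_le (P : ι → ℤ[X]) {k : ι} (hk : 2 ≤ (P k).natDegree)
    {ε : ℝ} (hε : 0 < ε) : ∃ M, 0 ≤ M ∧ ∀ N : ℕ, ∀ v ≠ 0,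
      (curveDiffCount (polyCurve P) (Icc 1 (N : ℤ)) v : ℝ) ≤ M * (N : ℝ) ^ ε := by
  set D := univ.sup fun j => (P j).natDegree
  have hD : ∀ j, (P j).natDegree ≤ D := fun j =>
    le_sup (f := fun j => (P j).natDegree) (mem_univ j)
  have hD0 : (0 : ℝ) < D := by exact_mod_cast (lt_of_lt_of_le (by lia) (hD k))
  obtain ⟨c, hc0, hc⟩ : ∃ c : ℤ, 0 ≤ c ∧
      ∀ j, ∑ i ∈ range ((P j).natDegree + 1), |(P j).coeff i| ≤ c := by
    set f := fun j => ∑ i ∈ range ((P j).natDegree + 1), |(P j).coeff i|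
    have hf : ∀ j, 0 ≤ f j := fun j => sum_nonneg fun _ _ => abs_nonneg _
    exact ⟨∑ j, f j, sum_nonneg fun j _ => hf j,
      fun j => single_le_sum (fun j _ => hf j) (mem_univ j)⟩
  obtain ⟨Cτ, hCτ0, hCτ⟩ := Nat.exists_card_divisors_le_mul_rpow (div_pos hε hD0)
  refine ⟨2 * (P k).natDegree * Cτ * (2 * c) ^ (ε / D), by positivity, fun N v hv => ?_⟩
  obtain ⟨j, hj⟩ := Function.ne_iff.mp hv
  rcases Nat.eq_zero_or_pos (curveDiffCount (polyCurve P) (Icc 1 (N : ℤ)) v) with h0 | hpos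
  · rw [h0, Nat.cast_zero]; positivity
  obtain ⟨⟨n, n'⟩, hp⟩ := card_pos.mp hpos
  simp only [mem_filter, mem_product] at hp
  have hvj : ((v j).natAbs : ℝ) ≤ 2 * c * N ^ D := by
    rw [Nat.cast_natAbs, ← congrFun hp.2 j]
    have hcj : 2 * (∑ i ∈ range ((P j).natDegree + 1), |(P j).coeff i|) * (N : ℤ) ^ D
        ≤ 2 * c * (N : ℤ) ^ D := by gcongr; exact hc j
    exact_mod_cast (abs_eval_sub_eval_le (P j) hp.1.1 hp.1.2 (hD j)).trans hcj
  calc (curveDiffCount (polyCurve P) (Icc 1 (N : ℤ)) v : ℝ)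
      ≤ 2 * (P k).natDegree * #(v j).natAbs.divisors := by
        exact_mod_cast curveDiffCount_polyCurve_le P hk _ hj
    _ ≤ 2 * (P k).natDegree * (Cτ * ((v j).natAbs : ℝ) ^ (ε / D)) := by
        gcongr; exact hCτ _ (Int.natAbs_ne_zero.mpr hj)
    _ ≤ 2 * (P k).natDegree * (Cτ * (2 * c * N ^ D) ^ (ε / D)) := by gcongr
    _ = 2 * (P k).natDegree * Cτ * (2 * c) ^ (ε / D) * (N : ℝ) ^ ε := by
        rw [Real.mul_rpow (by positivity) (by positivity), ← Real.rpow_natCast,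
          ← Real.rpow_mul (Nat.cast_nonneg _), mul_div_cancel₀ _ hD0.ne']
        ring

end PolynomialCurve

theorem exists_two_le_natDegree {d : ℕ} (hd : 1 ≤ d) (P : Fin d → ℤ[X])
    (hnc : ∀ j, 0 < (P j).natDegree)
    (hsep : ∀ i j : Fin d, i < j → (P i).natDegree < (P j).natDegree)
    (hnl : ¬ (d = 1 ∧ ∀ j, (P j).natDegree = 1)) : ∃ k, 2 ≤ (P k).natDegree := by
  rcases hd.eq_or_lt with rfl | hd2
  · obtain ⟨k, hk⟩ := not_forall.mp (not_and.mp hnl rfl)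
    exact ⟨k, by have := hnc k; lia⟩
  · let i : Fin d := ⟨0, by lia⟩
    let k : Fin d := ⟨1, hd2⟩
    exact ⟨k, by have := hsep i k (by simp [i, k, Fin.lt_def]); have := hnc i; lia⟩

theorem le_mul_rpow_of_pow_three_le {s A n a b ε : ℝ} (hA : 0 ≤ A) (hn : 0 ≤ n)
    (ha : 0 ≤ a) (hb : 0 ≤ b) (h : s ^ 3 ≤ A * n ^ (1 + 3 * ε) * a ^ 2 * b ^ 2) :
    s ≤ A ^ (1 / 3 : ℝ) * n ^ (1 / 3 + ε) * a ^ (2 / 3 : ℝ) * b ^ (2 / 3 : ℝ) := by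
  have cube : ∀ {x : ℝ} (r : ℝ), 0 ≤ x → (x ^ r) ^ 3 = x ^ (3 * r) := fun r hx => by
    rw [← Real.rpow_natCast, ← Real.rpow_mul hx, mul_comm]; norm_num
  refine le_of_pow_le_pow_left₀ three_ne_zero (by positivity) (h.trans_eq ?_)
  rw [mul_pow, mul_pow, mul_pow, cube _ hA, cube _ hn, cube _ ha, cube _ hb, ← Real.rpow_natCast a,
    ← Real.rpow_natCast b, show (3 : ℝ) * (1 / 3 + ε) = 1 + 3 * ε by ring]
  norm_num

/-- restricted weak-type ℓ^{3/2} → ℓ^3 estimate (with ε-loss) for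
discrete averages along a polynomial curve with separated degrees that is not
a single linear polynomial. -/
theorem stmt0 (d : ℕ) (hd : 1 ≤ d) (P : Fin d → Polynomial ℤ)
    (hnc : ∀ j, 0 < (P j).natDegree)
    (hsep : ∀ i j : Fin d, i < j → (P i).natDegree < (P j).natDegree)
    (hnl : ¬ (d = 1 ∧ ∀ j, (P j).natDegree = 1))
    (ε : ℝ) (hε : 0 < ε) :
    ∃ C : ℝ, 0 < C ∧ ∀ N : ℕ, 1 ≤ N → ∀ E F : Finset (Fin d → ℤ),
      (((F ×ˢ Finset.Icc (1:ℤ) (N:ℤ)).filter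
          (fun z => (fun j => z.1 j - (P j).eval z.2) ∈ E)).card : ℝ) ≤
        C * (N:ℝ) ^ ((1:ℝ)/3 + ε) * (E.card:ℝ) ^ ((2:ℝ)/3) * (F.card:ℝ) ^ ((2:ℝ)/3) := by
  obtain ⟨k, hk⟩ := exists_two_le_natDegree hd P hnc hsep hnl
  obtain ⟨M, hM0, hM⟩ := exists_curveDiffCount_polyCurve_le P hk (by positivity : 0 < 3 * ε)
  refine ⟨(((P k).natDegree : ℝ) ^ 2 + M) ^ (1 / 3 : ℝ), by positivity, fun N hN E F => ?_⟩
  have hN1 : (1 : ℝ) ≤ N := by exact_mod_cast hN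
  have hMN : 0 ≤ M * (N : ℝ) ^ (3 * ε) := by positivity
  have hcube := curveIncidences_pow_three_le
    (card_filter_polyCurve_eq_le P (k := k) (by lia) (Icc 1 (N : ℤ))) hMN (hM N) E F
  rw [Int.card_Icc, add_sub_cancel_right, Int.toNat_natCast] at hcube
  change (curveIncidences (polyCurve P) (Icc 1 (N : ℤ)) E F : ℝ) ≤ _
  refine le_mul_rpow_of_pow_three_le (by positivity) (by positivity) (by positivity)
    (by positivity) (hcube.trans ?_)
  rw [Real.rpow_add (by positivity), Real.rpow_one]
  have : (1 : ℝ) ≤ (N : ℝ) ^ (3 * ε) := Real.one_le_rpow hN1 (by positivity)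
  gcongr ?_ * _ * _
  nlinarith [mul_nonneg (by positivity : (0 : ℝ) ≤ (P k).natDegree ^ 2 * N) (sub_nonneg.mpr this)]
end

section
/- (Refinement lemma.) Let γ : ℤ → ℤ^d be a polynomial curve, N ≥ 1 an integer, and E, F ⊆ ℤ^d finite nonempty sets with T := #{(x,n) ∈ F × {1,…,N} : x − γ(n) ∈ E} > 0; set α := T/|F| and β := T/|E|. Then for every integer k ≥ 1 there exist constants c_1, …, c_k ∈ (0,1] depending only on j (not on γ, N, E, F) and sequences of subsets E = E_0 ⊇ E_1 ⊇ ⋯ ⊇ E_k and F = F_0 ⊇ F_1 ⊇ ⋯ ⊇ F_k such that for every 1 ≤ j ≤ k: (a) every x ∈ F_j satisfies #{n ∈ {1,…,N} : x − γ(n) ∈ E_{j−1}} ≥ c_j α; (b) #{(x,n) ∈ F_j × {1,…,N} : x − γ(n) ∈ E_{j−1}} ≥ c_j T; (c) every y ∈ E_j satisfies #{n ∈ {1,…,N} : y + γ(n) ∈ F_j} ≥ c_j β; (d) #{(y,n) ∈ E_j × {1,…,N} : y + γ(n) ∈ F_j} ≥ c_j T. -/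
open Finset

/-- The un-normalized pairing ⟨𝒜̃_N 1_E, 1_F⟩ = #{(x,n) ∈ F × [1,N] : x − γ(n) ∈ E}
for the polynomial curve γ(n) = ((P j).eval n)_j. -/
noncomputable def pairCount (d : ℕ) (P : Fin d → Polynomial ℤ) (N : ℕ)
    (E F : Finset (Fin d → ℤ)) : ℕ :=
  ((F ×ˢ Finset.Icc (1:ℤ) (N:ℤ)).filter
    (fun z => (fun j => z.1 j - (P j).eval z.2) ∈ E)).card

/-- The adjoint un-normalized pairing ⟨𝒜̃*_N 1_F, 1_E⟩ = #{(y,n) ∈ E × [1,N] : y + γ(n) ∈ F}. -/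
noncomputable def adjPairCount (d : ℕ) (P : Fin d → Polynomial ℤ) (N : ℕ)
    (E F : Finset (Fin d → ℤ)) : ℕ :=
  ((E ×ˢ Finset.Icc (1:ℤ) (N:ℤ)).filter
    (fun z => (fun j => z.1 j + (P j).eval z.2) ∈ F)).card

/-! Refine greedily with geometrically decaying thresholds. Given `E_{j-1} ⊆ E`,
`F_{j-1} ⊆ F` carrying mass `μ = T / 4^(j-1)` for the adjoint pairing, which equals the forward
one, keep the `x ∈ F_{j-1}` that see at least `μ / (2|F|)` points of `E_{j-1}`: the discarded
points carry at most `|F| · μ / (2|F|) = μ/2` of the forward mass. Then keep the `y ∈ E_{j-1}`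
that see at least `μ / (4|E|)` points of `F_j`: this loses at most `μ/4` of the remaining
adjoint mass, so mass `T / 4^j` survives and the induction continues with `c_j = 4^(-j)`. -/

namespace Refinement

variable {d : ℕ} (P : Fin d → Polynomial ℤ) (N : ℕ)

/-- `𝒜̃_N 1_A (x)`. -/
noncomputable def curveCount (A : Finset (Fin d → ℤ)) (x : Fin d → ℤ) : ℕ :=
  ((Icc (1:ℤ) (N:ℤ)).filter (fun n => (fun i => x i - (P i).eval n) ∈ A)).card

/-- `𝒜̃*_N 1_B (y)`. -/
noncomputable def adjCurveCount (B : Finset (Fin d → ℤ)) (y : Fin d → ℤ) : ℕ :=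
  ((Icc (1:ℤ) (N:ℤ)).filter (fun n => (fun i => y i + (P i).eval n) ∈ B)).card

lemma pairCount_eq_sum_curveCount (A B : Finset (Fin d → ℤ)) :
    pairCount d P N A B = ∑ x ∈ B, curveCount P N A x := by
  simp only [pairCount, curveCount, card_filter, sum_product]

lemma adjPairCount_eq_sum_adjCurveCount (A B : Finset (Fin d → ℤ)) :
    adjPairCount d P N A B = ∑ y ∈ A, adjCurveCount P N B y := by
  simp only [adjPairCount, adjCurveCount, card_filter, sum_product]

lemma pairCount_eq_adjPairCount (A B : Finset (Fin d → ℤ)) :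
    pairCount d P N A B = adjPairCount d P N A B := by
  refine card_nbij' (fun z => (fun i => z.1 i - (P i).eval z.2, z.2))
    (fun z => (fun i => z.1 i + (P i).eval z.2, z.2)) ?_ ?_ ?_ ?_ <;>
    intro z <;> simp <;> tauto

lemma sum_sub_card_mul_le_sum_filter {ι : Type*} (s : Finset ι) (w : ι → ℝ) {t : ℝ}
    (ht : 0 ≤ t) : ∑ i ∈ s, w i - #s * t ≤ ∑ i ∈ s with t ≤ w i, w i := by
  rw [← sum_filter_add_sum_filter_not s (t ≤ w ·)]
  have hsmall : ∑ i ∈ s with ¬t ≤ w i, w i ≤ #(s.filter (¬t ≤ w ·)) * t := by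
    rw [← nsmul_eq_mul]
    exact sum_le_card_nsmul _ _ _ fun i hi => (not_le.1 (mem_filter.1 hi).2).le
  have hcard : (#(s.filter (¬t ≤ w ·)) : ℝ) ≤ #s := mod_cast card_filter_le _ _
  linarith [mul_le_mul_of_nonneg_right hcard ht]

lemma pairCount_sub_le_pairCount_filter (A B : Finset (Fin d → ℤ)) {t : ℝ} (ht : 0 ≤ t) :
    (pairCount d P N A B : ℝ) - #B * t ≤
      pairCount d P N A (B.filter fun x => t ≤ (curveCount P N A x : ℝ)) := by
  simp only [pairCount_eq_sum_curveCount, Nat.cast_sum]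
  exact sum_sub_card_mul_le_sum_filter B _ ht

lemma adjPairCount_sub_le_adjPairCount_filter (A B : Finset (Fin d → ℤ)) {t : ℝ}
    (ht : 0 ≤ t) :
    (adjPairCount d P N A B : ℝ) - #A * t ≤
      adjPairCount d P N (A.filter fun y => t ≤ (adjCurveCount P N B y : ℝ)) B := by
  simp only [adjPairCount_eq_sum_adjCurveCount, Nat.cast_sum]
  exact sum_sub_card_mul_le_sum_filter A _ ht

variable (nE nF : ℕ)

noncomputable def refineStep (μ : ℝ) (p : Finset (Fin d → ℤ) × Finset (Fin d → ℤ)) :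
    Finset (Fin d → ℤ) × Finset (Fin d → ℤ) :=
  let B := p.2.filter fun x => μ / (2 * nF) ≤ (curveCount P N p.1 x : ℝ)
  (p.1.filter fun y => μ / (4 * nE) ≤ (adjCurveCount P N B y : ℝ), B)

variable {P N nE nF} {μ : ℝ} {p : Finset (Fin d → ℤ) × Finset (Fin d → ℤ)}

lemma refineStep_fst_subset : (refineStep P N nE nF μ p).1 ⊆ p.1 := filter_subset _ _

lemma refineStep_snd_subset : (refineStep P N nE nF μ p).2 ⊆ p.2 := filter_subset _ _

lemma le_curveCount_of_mem_refineStep {x : Fin d → ℤ}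
    (hx : x ∈ (refineStep P N nE nF μ p).2) :
    μ / (2 * nF) ≤ curveCount P N p.1 x :=
  (mem_filter.1 hx).2

lemma le_adjCurveCount_of_mem_refineStep {y : Fin d → ℤ}
    (hy : y ∈ (refineStep P N nE nF μ p).1) :
    μ / (4 * nE) ≤ adjCurveCount P N (refineStep P N nE nF μ p).2 y :=
  (mem_filter.1 hy).2

lemma half_le_pairCount_refineStep (hnF : 0 < nF) (hB : #p.2 ≤ nF) (hμ : 0 ≤ μ)
    (hmass : μ ≤ adjPairCount d P N p.1 p.2) :
    μ / 2 ≤ pairCount d P N p.1 (refineStep P N nE nF μ p).2 := by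
  have hloss : (#p.2 : ℝ) * (μ / (2 * nF)) ≤ μ / 2 :=
    calc (#p.2 : ℝ) * (μ / (2 * nF)) ≤ nF * (μ / (2 * nF)) := by gcongr
      _ = μ / 2 := by field_simp
  have := pairCount_sub_le_pairCount_filter P N p.1 p.2 (t := μ / (2 * nF)) (by positivity)
  rw [pairCount_eq_adjPairCount] at this
  exact le_trans (by linarith) this

lemma quarter_le_adjPairCount_refineStep (hnE : 0 < nE) (hnF : 0 < nF) (hA : #p.1 ≤ nE)
    (hB : #p.2 ≤ nF) (hμ : 0 ≤ μ) (hmass : μ ≤ adjPairCount d P N p.1 p.2) :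
    μ / 4 ≤ adjPairCount d P N (refineStep P N nE nF μ p).1 (refineStep P N nE nF μ p).2 := by
  have hhalf := half_le_pairCount_refineStep (nE := nE) hnF hB hμ hmass
  rw [pairCount_eq_adjPairCount] at hhalf
  have hloss : (#p.1 : ℝ) * (μ / (4 * nE)) ≤ μ / 4 :=
    calc (#p.1 : ℝ) * (μ / (4 * nE)) ≤ nE * (μ / (4 * nE)) := by gcongr
      _ = μ / 4 := by field_simp
  have := adjPairCount_sub_le_adjPairCount_filter P N p.1 (refineStep P N nE nF μ p).2
    (t := μ / (4 * nE)) (by positivity)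
  exact le_trans (by linarith) this

variable (P N)

noncomputable def refineSeq (T : ℝ) (E F : Finset (Fin d → ℤ)) :
    ℕ → Finset (Fin d → ℤ) × Finset (Fin d → ℤ)
  | 0 => (E, F)
  | m + 1 => refineStep P N #E #F (T / 4 ^ m) (refineSeq T E F m)

lemma refineSeq_subset_and_mass {E F : Finset (Fin d → ℤ)} (hE : E.Nonempty)
    (hF : F.Nonempty) (m : ℕ) :
    let p := refineSeq P N (pairCount d P N E F) E F m
    p.1 ⊆ E ∧ p.2 ⊆ F ∧
      (pairCount d P N E F : ℝ) / 4 ^ m ≤ adjPairCount d P N p.1 p.2 := by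
  induction m with
  | zero => simp [refineSeq, pairCount_eq_adjPairCount]
  | succ m ih =>
    obtain ⟨hAE, hBF, hmass⟩ := ih
    refine ⟨refineStep_fst_subset.trans hAE, refineStep_snd_subset.trans hBF, ?_⟩
    rw [pow_succ, ← div_div]
    exact quarter_le_adjPairCount_refineStep hE.card_pos hF.card_pos (card_le_card hAE)
      (card_le_card hBF) (by positivity) hmass

end Refinement

open Refinement in
theorem stmt8_general (k : ℕ) :
    ∃ c : ℕ → ℝ,
      (∀ j, 1 ≤ j → j ≤ k → 0 < c j ∧ c j ≤ 1) ∧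
      ∀ (d : ℕ) (P : Fin d → Polynomial ℤ) (N : ℕ), 1 ≤ N →
        ∀ E F : Finset (Fin d → ℤ), E.Nonempty → F.Nonempty →
          0 < pairCount d P N E F →
          ∃ Es Fs : ℕ → Finset (Fin d → ℤ),
            Es 0 = E ∧ Fs 0 = F ∧
            ∀ j, 1 ≤ j → j ≤ k →
              Fs j ⊆ Fs (j - 1) ∧ Es j ⊆ Es (j - 1) ∧
              -- (a): every x ∈ F_j sees ≳ α points of E_{j−1} along the curve
              (∀ x ∈ Fs j,
                c j * ((pairCount d P N E F : ℝ) / (F.card : ℝ)) ≤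
                  (((Finset.Icc (1:ℤ) (N:ℤ)).filter
                    (fun n => (fun i => x i - (P i).eval n) ∈ Es (j - 1))).card : ℝ)) ∧
              -- (b): mass preservation for the forward pairing
              c j * (pairCount d P N E F : ℝ) ≤ (pairCount d P N (Es (j - 1)) (Fs j) : ℝ) ∧
              -- (c): every y ∈ E_j sees ≳ β points of F_j along the curve
              (∀ y ∈ Es j,
                c j * ((pairCount d P N E F : ℝ) / (E.card : ℝ)) ≤
                  (((Finset.Icc (1:ℤ) (N:ℤ)).filter
                    (fun n => (fun i => y i + (P i).eval n) ∈ Fs j)).card : ℝ)) ∧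
              -- (d): mass preservation for the adjoint pairing
              c j * (pairCount d P N E F : ℝ) ≤ (adjPairCount d P N (Es j) (Fs j) : ℝ) := by
  refine ⟨fun j => 1 / 4 ^ j, fun j _ _ =>
    ⟨by positivity, div_le_one_of_le₀ (one_le_pow₀ (by norm_num)) (by positivity)⟩, ?_⟩
  intro d P N _ E F hE hF _
  set T : ℝ := (pairCount d P N E F : ℝ)
  refine ⟨fun j => (refineSeq P N T E F j).1, fun j => (refineSeq P N T E F j).2, rfl, rfl, ?_⟩
  rintro j hj -
  obtain ⟨m, rfl⟩ := Nat.exists_eq_add_of_le' hj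
  obtain ⟨-, hBF, hmass⟩ := refineSeq_subset_and_mass P N hE hF m
  simp only [Nat.add_sub_cancel]
  set μ := T / 4 ^ m
  have hμ : 0 ≤ μ := by positivity
  have hc : ∀ a : ℝ, 1 / 4 ^ (m + 1) * (T / a) = μ / (4 * a) := fun a => by
    rw [pow_succ]; ring
  have hcT : 1 / 4 ^ (m + 1) * T = μ / 4 := by
    rw [pow_succ]; ring
  refine ⟨refineStep_snd_subset, refineStep_fst_subset, fun x hx => ?_, ?_, fun y hy => ?_, ?_⟩
  · rw [hc]
    refine le_trans ?_ (le_curveCount_of_mem_refineStep hx)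
    exact div_le_div_of_nonneg_left hμ (by positivity) (by linarith [hF.card_pos])
  · rw [hcT]
    exact le_trans (by linarith)
      (half_le_pairCount_refineStep hF.card_pos (card_le_card hBF) hμ hmass (nE := #E))
  · rw [hc]
    exact le_adjCurveCount_of_mem_refineStep hy
  · rw [hcT]
    have := (refineSeq_subset_and_mass P N hE hF (m + 1)).2.2
    rwa [pow_succ, ← div_div] at this

/-- Refinement lemma: there are constants c_j ∈ (0,1], depending only
on j (not on γ, N, E, F), and nested refinements E = E₀ ⊇ E₁ ⊇ ⋯ ⊇ E_k,
F = F₀ ⊇ F₁ ⊇ ⋯ ⊇ F_k satisfying the pointwise lower bounds (a), (c) and the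
mass-preservation bounds (b), (d). -/
theorem stmt8 (k : ℕ) (hk : 1 ≤ k) :
    ∃ c : ℕ → ℝ,
      (∀ j, 1 ≤ j → j ≤ k → 0 < c j ∧ c j ≤ 1) ∧
      ∀ (d : ℕ) (P : Fin d → Polynomial ℤ) (N : ℕ), 1 ≤ N →
        ∀ E F : Finset (Fin d → ℤ), E.Nonempty → F.Nonempty →
          0 < pairCount d P N E F →
          ∃ Es Fs : ℕ → Finset (Fin d → ℤ),
            Es 0 = E ∧ Fs 0 = F ∧
            ∀ j, 1 ≤ j → j ≤ k →
              Fs j ⊆ Fs (j - 1) ∧ Es j ⊆ Es (j - 1) ∧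
              -- (a): every x ∈ F_j sees ≳ α points of E_{j−1} along the curve
              (∀ x ∈ Fs j,
                c j * ((pairCount d P N E F : ℝ) / (F.card : ℝ)) ≤
                  (((Finset.Icc (1:ℤ) (N:ℤ)).filter
                    (fun n => (fun i => x i - (P i).eval n) ∈ Es (j - 1))).card : ℝ)) ∧
              -- (b): mass preservation for the forward pairing
              c j * (pairCount d P N E F : ℝ) ≤ (pairCount d P N (Es (j - 1)) (Fs j) : ℝ) ∧
              -- (c): every y ∈ E_j sees ≳ β points of F_j along the curve
              (∀ y ∈ Es j,
                c j * ((pairCount d P N E F : ℝ) / (E.card : ℝ)) ≤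
                  (((Finset.Icc (1:ℤ) (N:ℤ)).filter
                    (fun n => (fun i => y i + (P i).eval n) ∈ Fs j)).card : ℝ)) ∧
              -- (d): mass preservation for the adjoint pairing
              c j * (pairCount d P N E F : ℝ) ≤ (adjPairCount d P N (Es j) (Fs j) : ℝ) :=
  stmt8_general k
end

section
/- Let P ∈ ℤ[X] with deg P ≥ 2. Then there exists a nonzero polynomial Q ∈ ℤ[X, Y, Z] such that P(X) − P(Y) + P(Z) − P(X − Y + Z) = Q(X, Y, Z) · (X − Y) · (Y − Z) identically, and moreover for all integers n, m the univariate polynomial Z ↦ Q(n, m, Z) is not identically zero. -/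
/-!
Divisibility of `P(x) - P(y) + P(z) - P(x - y + z)` by `(x - y)(y - z)` reduces, monomial by
monomial, to two factorizations `a ^ k - b ^ k = (a - b) * (geometric sum)`, using
`x - (x - y + z) = y - z` and `(x - y + z) - z = x - y`.

For the nonvanishing, view `Q` in `(ℤ[x, y])[z]`. There the identity reads
`(P(x) - P(y)) + P(z) - P(z + (x - y)) = Q * (x - y) * (y - z)` with `P(x) - P(y)` a constant,
and comparing the coefficients of `z ^ (d - 1)` over the domain `ℤ[x, y]`, where `x - y ≠ 0`,
shows that the coefficient of `z ^ (d - 2)` in `Q` is the constant `d * lc P`. Being constant, it survives every specialization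
`x = n`, `y = m`, including `n = m`, where the identity itself says nothing about `Q`.
-/

open Polynomial Finset

section Divisibility

variable {A : Type*} [CommRing A]

theorem sub_dvd_geom_sum₂_sub_geom_sum₂ {x y z w : A} (h : x - y = w - z) (k : ℕ) :
    x - y ∣ ∑ i ∈ range k, x ^ i * w ^ (k - 1 - i) - ∑ i ∈ range k, y ^ i * z ^ (k - 1 - i) := by
  rw [← sum_sub_distrib]
  refine dvd_sum fun i _ => ?_
  have hw : x - y ∣ w ^ (k - 1 - i) - z ^ (k - 1 - i) := h ▸ sub_dvd_pow_sub_pow w z _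
  rw [show x ^ i * w ^ (k - 1 - i) - y ^ i * z ^ (k - 1 - i)
      = (x ^ i - y ^ i) * w ^ (k - 1 - i) + y ^ i * (w ^ (k - 1 - i) - z ^ (k - 1 - i)) by ring]
  exact dvd_add (dvd_mul_of_dvd_left (sub_dvd_pow_sub_pow x y i) _) (dvd_mul_of_dvd_right hw _)

theorem sub_mul_sub_dvd_pow_sub_pow_add_pow_sub_pow (x y z : A) (k : ℕ) :
    (x - y) * (y - z) ∣ x ^ k - y ^ k + z ^ k - (x - y + z) ^ k := by
  set w := x - y + z
  have hyz : y - z = x - w := by ring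
  have key : x ^ k - y ^ k + z ^ k - w ^ k
      = (∑ i ∈ range k, x ^ i * w ^ (k - 1 - i) - ∑ i ∈ range k, y ^ i * z ^ (k - 1 - i))
        * (y - z) := by
    rw [sub_mul, geom_sum₂_mul, hyz, geom_sum₂_mul]
    ring
  rw [key]
  exact mul_dvd_mul (sub_dvd_geom_sum₂_sub_geom_sum₂ (by ring) k) dvd_rfl

variable {R : Type*} [CommRing R] [Algebra R A]

noncomputable def parallelogramDefect (P : R[X]) (x y z : A) : A :=
  aeval x P - aeval y P + aeval z P - aeval (x - y + z) P

theorem sub_mul_sub_dvd_parallelogramDefect (P : R[X]) (x y z : A) :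
    (x - y) * (y - z) ∣ parallelogramDefect P x y z := by
  simp only [parallelogramDefect, aeval_eq_sum_range, ← sum_sub_distrib, ← sum_add_distrib,
    ← smul_sub, ← smul_add]
  refine dvd_sum fun k _ => ?_
  rw [Algebra.smul_def]
  exact dvd_mul_of_dvd_right (sub_mul_sub_dvd_pow_sub_pow_add_pow_sub_pow x y z k) _

theorem map_parallelogramDefect {B : Type*} [CommRing B] [Algebra R B] (φ : A →ₐ[R] B)
    (P : R[X]) (x y z : A) :
    φ (parallelogramDefect P x y z) = parallelogramDefect P (φ x) (φ y) (φ z) := by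
  simp only [parallelogramDefect, map_sub, map_add, ← aeval_algHom_apply]

end Divisibility

namespace Polynomial

variable {R : Type*} [CommRing R]

theorem aeval_C_left {S : Type*} [CommRing S] [Algebra R S] (P : R[X]) (s : S) :
    aeval (C s) P = C (aeval s P) := by
  rw [← CAlgHom_apply (R := R), aeval_algHom_apply, CAlgHom_apply]

theorem aeval_X_add_C_left {S : Type*} [CommRing S] [Algebra R S] (P : R[X]) (s : S) :
    aeval (X + C s) P = taylor s (P.map (algebraMap R S)) := by
  rw [taylor_apply, comp_eq_aeval, aeval_map_algebraMap]

theorem coeff_taylor_natDegree_sub_one (f : R[X]) (r : R) :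
    (taylor r f).coeff (f.natDegree - 1) =
      f.coeff (f.natDegree - 1) + f.natDegree * f.leadingCoeff * r := by
  set d := f.natDegree
  obtain hd | hd := Nat.eq_zero_or_pos d
  · rw [eq_C_of_natDegree_eq_zero hd, taylor_C]
    simp [d, hd]
  have hdeg : (hasseDeriv (d - 1) f).natDegree < 2 :=
    (natDegree_hasseDeriv_le f (d - 1)).trans_lt (by omega)
  rw [taylor_coeff, eval_eq_sum_range' hdeg, sum_range_succ, sum_range_one, hasseDeriv_coeff,
    hasseDeriv_coeff, zero_add, show 1 + (d - 1) = d by omega, Nat.choose_self,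
    Nat.choose_symm hd, Nat.choose_one_right]
  simp only [leadingCoeff, Nat.cast_one, mul_one, pow_zero, pow_one, d]
  ring

theorem coeff_taylor_of_natDegree_le (f : R[X]) (r : R) {k : ℕ} (hk : f.natDegree ≤ k) :
    (taylor r f).coeff k = f.coeff k := by
  obtain rfl | hk := hk.eq_or_lt
  · exact coeff_taylor_natDegree r f
  · rw [coeff_eq_zero_of_natDegree_lt (by rwa [natDegree_taylor]), coeff_eq_zero_of_natDegree_lt hk]

theorem coeff_natDegree_sub_two_of_sub_taylor_eq_mul [IsDomain R] {f r : R[X]}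
    (hf : 2 ≤ f.natDegree) {c : R} (hc : c ≠ 0) {k v : R}
    (h : C k + f - taylor c f = r * (C c * (C v - X))) :
    r.coeff (f.natDegree - 2) = f.natDegree * f.leadingCoeff := by
  set d := f.natDegree
  set g := C k + f - taylor c f
  have hg_coeff : ∀ j, j ≠ 0 → g.coeff j = f.coeff j - (taylor c f).coeff j := fun j hj => by
    simp [g, coeff_C, hj]
  have hg_top : g.coeff (d - 1) = -(d * f.leadingCoeff * c) := by
    rw [hg_coeff _ (by omega), coeff_taylor_natDegree_sub_one]
    ring
  have hg_deg : g.natDegree ≤ d - 1 := by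
    refine natDegree_le_iff_coeff_eq_zero.mpr fun j hj => ?_
    rw [hg_coeff _ (by omega), coeff_taylor_of_natDegree_le _ _ (by omega), sub_self]
  have hlin : (C c * (C v - X)).natDegree = 1 := by
    rw [natDegree_C_mul hc, ← neg_sub, natDegree_neg, natDegree_X_sub_C]
  have hr_top : r.coeff (d - 1) = 0 := by
    by_cases hr : r = 0
    · rw [hr, coeff_zero]
    have hlin0 : C c * (C v - X) ≠ 0 := fun h0 => by simp [h0] at hlin
    have hr_deg := natDegree_mul hr hlin0
    rw [← h, hlin] at hr_deg
    exact coeff_eq_zero_of_natDegree_lt (by omega)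
  have hg_top' : g.coeff (d - 1) = c * v * r.coeff (d - 1) - c * r.coeff (d - 2) := by
    rw [h, show r * (C c * (C v - X)) = C (c * v) * r - C c * (r * X) by simp only [map_mul]; ring,
      coeff_sub, coeff_C_mul, coeff_C_mul, show d - 1 = d - 2 + 1 by omega, coeff_mul_X]
  rw [hr_top, hg_top] at hg_top'
  exact mul_left_cancel₀ hc (by linear_combination hg_top')

end Polynomial

noncomputable def toPolyInZ : MvPolynomial (Fin 3) ℤ →ₐ[ℤ] (MvPolynomial (Fin 2) ℤ)[X] :=
  MvPolynomial.aeval ![C (MvPolynomial.X 0), C (MvPolynomial.X 1), X]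

theorem toPolyInZ_X (i : Fin 3) :
    toPolyInZ (MvPolynomial.X i) = ![C (MvPolynomial.X 0), C (MvPolynomial.X 1), X] i :=
  MvPolynomial.aeval_X _ _

theorem aeval_eq_map_toPolyInZ (n m : ℤ) (Q : MvPolynomial (Fin 3) ℤ) :
    MvPolynomial.aeval ![C n, C m, X] Q = (toPolyInZ Q).map (MvPolynomial.eval ![n, m]) := by
  have h : (mapAlgHom (MvPolynomial.aeval ![n, m])).comp toPolyInZ =
      MvPolynomial.aeval ![C n, C m, X] :=
    MvPolynomial.algHom_ext fun i => by fin_cases i <;> simp [toPolyInZ]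
  rw [← h]
  simp

theorem coeff_toPolyInZ_of_parallelogramDefect_eq {P : ℤ[X]} (hP : 2 ≤ P.natDegree)
    {Q : MvPolynomial (Fin 3) ℤ}
    (hQ : parallelogramDefect P (MvPolynomial.X 0) (MvPolynomial.X 1) (MvPolynomial.X 2) =
      (MvPolynomial.X 0 - MvPolynomial.X 1) * (MvPolynomial.X 1 - MvPolynomial.X 2) * Q) :
    (toPolyInZ Q).coeff (P.natDegree - 2) = MvPolynomial.C (P.natDegree * P.leadingCoeff) := by
  set R := MvPolynomial (Fin 2) ℤ
  have hinj : Function.Injective (algebraMap ℤ R) := (algebraMap ℤ R).injective_int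
  have hdeg : (P.map (algebraMap ℤ R)).natDegree = P.natDegree :=
    natDegree_map_eq_of_injective hinj P
  have hc : (MvPolynomial.X 0 - MvPolynomial.X 1 : R) ≠ 0 :=
    sub_ne_zero.mpr (MvPolynomial.X_injective.ne (by decide))
  have h := congrArg toPolyInZ hQ
  rw [map_parallelogramDefect] at h
  simp only [parallelogramDefect, map_sub, map_mul, toPolyInZ_X,
    Matrix.cons_val_zero, Matrix.cons_val_one, Matrix.cons_val_two, Matrix.head_cons,
    Matrix.tail_cons, aeval_C_left, aeval_X_left_eq_map] at h
  rw [show C (MvPolynomial.X 0 : R) - C (MvPolynomial.X 1) + X =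
      X + C (MvPolynomial.X 0 - MvPolynomial.X 1) by rw [C_sub]; ring,
    aeval_X_add_C_left, ← C_sub] at h
  replace h := h.trans (by rw [C_sub]; ring :
    _ = toPolyInZ Q * (C (MvPolynomial.X 0 - MvPolynomial.X 1 : R) * (C (MvPolynomial.X 1) - X)))
  have key := coeff_natDegree_sub_two_of_sub_taylor_eq_mul (hdeg ▸ hP) hc h
  rw [hdeg, leadingCoeff_map_of_injective hinj] at key
  simp [key]

theorem aeval_ne_zero_of_parallelogramDefect_eq {P : ℤ[X]} (hP : 2 ≤ P.natDegree)
    {Q : MvPolynomial (Fin 3) ℤ}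
    (hQ : parallelogramDefect P (MvPolynomial.X 0) (MvPolynomial.X 1) (MvPolynomial.X 2) =
      (MvPolynomial.X 0 - MvPolynomial.X 1) * (MvPolynomial.X 1 - MvPolynomial.X 2) * Q)
    (n m : ℤ) : MvPolynomial.aeval ![C n, C m, X] Q ≠ 0 := by
  intro h
  have hcoeff := congrArg (coeff · (P.natDegree - 2)) h
  simp only [aeval_eq_map_toPolyInZ, coeff_map, coeff_toPolyInZ_of_parallelogramDefect_eq hP hQ,
    MvPolynomial.eval_C, coeff_zero] at hcoeff
  have hP0 : P ≠ 0 := by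
    rintro rfl
    simp at hP
  exact mul_ne_zero (by omega) (leadingCoeff_ne_zero.mpr hP0) hcoeff

/-- for P ∈ ℤ[X] of degree ≥ 2 there is a nonzero Q ∈ ℤ[X,Y,Z] with
P(X) − P(Y) + P(Z) − P(X − Y + Z) = Q(X,Y,Z)·(X − Y)·(Y − Z), and Q(n,m,Z) not
identically zero for all integers n, m. -/
theorem stmt13 (P : Polynomial ℤ) (hP : 2 ≤ P.natDegree) :
    ∃ Q : MvPolynomial (Fin 3) ℤ,
      Polynomial.aeval (MvPolynomial.X 0 : MvPolynomial (Fin 3) ℤ) P -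
          Polynomial.aeval (MvPolynomial.X 1 : MvPolynomial (Fin 3) ℤ) P +
          Polynomial.aeval (MvPolynomial.X 2 : MvPolynomial (Fin 3) ℤ) P -
          Polynomial.aeval
            (MvPolynomial.X 0 - MvPolynomial.X 1 + MvPolynomial.X 2 :
              MvPolynomial (Fin 3) ℤ) P =
        Q * (MvPolynomial.X 0 - MvPolynomial.X 1) * (MvPolynomial.X 1 - MvPolynomial.X 2) ∧
      Q ≠ 0 ∧
      ∀ n m : ℤ,
        MvPolynomial.aeval
            (fun i : Fin 3 =>
              if i = 0 then Polynomial.C n else if i = 1 then Polynomial.C m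
              else (Polynomial.X : Polynomial ℤ)) Q ≠ 0 := by
  obtain ⟨Q, hQ⟩ := sub_mul_sub_dvd_parallelogramDefect P
    (MvPolynomial.X 0 : MvPolynomial (Fin 3) ℤ) (MvPolynomial.X 1) (MvPolynomial.X 2)
  have hne := aeval_ne_zero_of_parallelogramDefect_eq hP hQ
  refine ⟨Q, hQ.trans (by ring), fun h => hne 0 0 (by rw [h, map_zero]), fun n m => ?_⟩
  convert hne n m using 3
  funext i
  fin_cases i <;> rfl
end
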